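/- Fix positive integers s, M, N with N ≥ 2s, a constant δ ∈ (0,1), a norm ‖·‖_* on ℝ^N, and constants C₁, C₂ > 0. Suppose that for every matrix A ∈ ℝ^{M×N} satisfying the RIP of order 2s with constant δ, every x, x̂ ∈ ℝ^N, and every ρ ≥ 0, the conditions ‖x̂‖₁ ≤ ‖x‖₁ and ‖Ax − Ax̂‖₂ ≤ 2ρ imply ‖x̂ − x‖_* ≤ C₁·ρ + C₂·σ_s(x). Then for every matrix Φ ∈ ℝ^{M×N} satisfying RIP-NSP of order 2s with constant δ, every x, x̂ ∈ ℝ^N, and every ε ≥ 0, the conditions ‖x̂‖₁ ≤ ‖x‖₁ and ‖Φx − Φx̂‖₂ ≤ 2ε imply ‖x̂ − x‖_* ≤ C₁·(√(1+δ)/λ(Φ))·√(N/s)·ε + C₂·σ_s(x). -/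

import Mathlib

open scoped BigOperators Matrix

/-- The Euclidean (ℓ²) norm of a real vector. -/
noncomputable def l2norm {ι : Type*} [Fintype ι] (v : ι → ℝ) : ℝ :=
  Real.sqrt (∑ i, (v i) ^ 2)

/-- The ℓ¹ norm of a real vector. -/
noncomputable def l1norm {ι : Type*} [Fintype ι] (v : ι → ℝ) : ℝ :=
  ∑ i, |v i|

/-- `v` has at most `k` nonzero entries. -/
def IsSparse {ι : Type*} {α : Type*} [Zero α] (k : ℕ) (v : ι → α) : Prop :=
  ∃ T : Finset ι, T.card ≤ k ∧ ∀ i ∉ T, v i = 0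

/-- The restricted isometry property of order `k` with constant `δ`. -/
def HasRIP {M N : ℕ} (Φ : Matrix (Fin M) (Fin N) ℝ) (k : ℕ) (δ : ℝ) : Prop :=
  ∀ v : Fin N → ℝ, IsSparse k v →
    (1 - δ) * l2norm v ^ 2 ≤ l2norm (Φ.mulVec v) ^ 2 ∧
      l2norm (Φ.mulVec v) ^ 2 ≤ (1 + δ) * l2norm v ^ 2

/-- `Φ` has the same null space as some matrix with RIP of order `k`, constant `δ`. -/
def HasRIPNSP {M N : ℕ} (Φ : Matrix (Fin M) (Fin N) ℝ) (k : ℕ) (δ : ℝ) : Prop :=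
  ∃ A : Matrix (Fin M) (Fin N) ℝ,
    {v : Fin N → ℝ | A.mulVec v = 0} = {v : Fin N → ℝ | Φ.mulVec v = 0} ∧ HasRIP A k δ

/-- The null space property of order `s` with constant `γ`. -/
def HasNSP {M N : ℕ} (Φ : Matrix (Fin M) (Fin N) ℝ) (s : ℕ) (γ : ℝ) : Prop :=
  ∀ v : Fin N → ℝ, Φ.mulVec v = 0 → ∀ T : Finset (Fin N), T.card ≤ s →
    ∑ i ∈ T, |v i| ≤ γ * ∑ i ∈ Tᶜ, |v i|

/-- `σ_s(x)`: the ℓ¹ distance from `x` to the set of `s`-sparse vectors. -/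
noncomputable def sigmaApprox {N : ℕ} (s : ℕ) (x : Fin N → ℝ) : ℝ :=
  sInf { t : ℝ | ∃ y : Fin N → ℝ, IsSparse s y ∧ t = l1norm (x - y) }

/-- The smallest positive singular value of `Φ`: the infimum of `‖Φx‖₂` over unit
vectors `x` orthogonal to the kernel of `Φ`. -/
noncomputable def smallestPosSV {M N : ℕ} (Φ : Matrix (Fin M) (Fin N) ℝ) : ℝ :=
  sInf { t : ℝ | ∃ x : Fin N → ℝ, l2norm x = 1 ∧
    (∀ y : Fin N → ℝ, Φ.mulVec y = 0 → x ⬝ᵥ y = 0) ∧ t = l2norm (Φ.mulVec x) }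

/-- The operator norm of `Φ` (sup of `‖Φx‖₂` over unit vectors). -/
noncomputable def opNorm {M N : ℕ} (Φ : Matrix (Fin M) (Fin N) ℝ) : ℝ :=
  sSup { t : ℝ | ∃ x : Fin N → ℝ, l2norm x = 1 ∧ t = l2norm (Φ.mulVec x) }

/-! Let `A` be an RIP matrix with `ker A = ker Φ`, and split `x - x̂ = w + u` with `w ∈ ker Φ` and
`u ⊥ ker Φ`, so that `Ax - Ax̂ = Au` and `Φx - Φx̂ = Φu`. Cutting `u` into at most `N / s` blocks
of `2s` consecutive coordinates, the RIP and Cauchy–Schwarz give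
`‖Au‖₂ ≤ √(1 + δ) √(N / s) ‖u‖₂`, while `‖u‖₂ ≤ ‖Φu‖₂ / λ(Φ) ≤ 2ε / λ(Φ)`. Hence the
hypothesis for `A` applies with `ρ = √(1 + δ) √(N / s) ε / λ(Φ)`. -/

open WithLp (toLp ofLp)

lemma sum_le_sqrt_card_mul_sqrt_sum_sq {κ : Type*} (t : Finset κ) (a : κ → ℝ) :
    ∑ j ∈ t, a j ≤ √(t.card) * √(∑ j ∈ t, a j ^ 2) := by
  rw [← Real.sqrt_mul (Nat.cast_nonneg _)]
  exact Real.le_sqrt_of_sq_le sq_sum_le_card_mul_sum_sq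

section L2Norm

variable {ι : Type*} [Fintype ι]

lemma l2norm_eq_norm_toLp (v : ι → ℝ) : l2norm v = ‖(toLp 2 v : EuclideanSpace ℝ ι)‖ := by
  simp [l2norm, EuclideanSpace.norm_eq]

lemma l2norm_nonneg (v : ι → ℝ) : 0 ≤ l2norm v := Real.sqrt_nonneg _

lemma l2norm_sq (v : ι → ℝ) : l2norm v ^ 2 = ∑ i, v i ^ 2 :=
  Real.sq_sqrt (Finset.sum_nonneg fun _ _ => sq_nonneg _)

lemma l2norm_smul (a : ℝ) (v : ι → ℝ) : l2norm (a • v) = |a| * l2norm v := by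
  simp only [l2norm_eq_norm_toLp, WithLp.toLp_smul, norm_smul, Real.norm_eq_abs]

lemma l2norm_sum_le {κ : Type*} (t : Finset κ) (f : κ → ι → ℝ) :
    l2norm (∑ j ∈ t, f j) ≤ ∑ j ∈ t, l2norm (f j) := by
  simp only [l2norm_eq_norm_toLp, WithLp.toLp_sum]
  exact norm_sum_le _ _

end L2Norm

section Blocks

open Finset

variable {ι : Type*}

lemma sum_range_indicator_fiber (q : ι → ℕ) {m : ℕ} (hq : ∀ i, q i < m) (u : ι → ℝ) :
    ∑ j ∈ range m, {i | q i = j}.indicator u = u := by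
  funext i
  simp [Finset.sum_apply, Set.indicator_apply, hq i]

lemma sum_range_l2norm_indicator_fiber_sq [Fintype ι] (q : ι → ℕ) {m : ℕ} (hq : ∀ i, q i < m)
    (u : ι → ℝ) : ∑ j ∈ range m, l2norm ({i | q i = j}.indicator u) ^ 2 = l2norm u ^ 2 := by
  simp only [l2norm_sq]
  rw [sum_comm]
  refine sum_congr rfl fun i _ => ?_
  simp [Set.indicator_apply, ite_pow, hq i]

lemma isSparse_indicator_fiber [Fintype ι] {k : ℕ} (q : ι → ℕ) (j : ℕ)
    (hq : #{i | q i = j} ≤ k) (u : ι → ℝ) : IsSparse k ({i | q i = j}.indicator u) :=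
  ⟨({i | q i = j} : Finset ι), hq, fun i hi => Set.indicator_of_notMem (by simpa using hi) u⟩

lemma l2norm_mulVec_le_of_fibers [Fintype ι] {m : Type*} [Fintype m] {k : ℕ} {c : ℝ} (hc : 0 ≤ c)
    (A : Matrix m ι ℝ) (hA : ∀ v, IsSparse k v → l2norm (A *ᵥ v) ≤ c * l2norm v)
    (q : ι → ℕ) {n : ℕ} (hqn : ∀ i, q i < n) (hq : ∀ j, #{i | q i = j} ≤ k) (u : ι → ℝ) :
    l2norm (A *ᵥ u) ≤ c * √n * l2norm u := by
  set block : ℕ → ι → ℝ := fun j => {i | q i = j}.indicator u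
  calc l2norm (A *ᵥ u) = l2norm (∑ j ∈ range n, A *ᵥ block j) := by
        rw [← Matrix.mulVec_sum, sum_range_indicator_fiber q hqn]
    _ ≤ ∑ j ∈ range n, c * l2norm (block j) :=
        (l2norm_sum_le _ _).trans <| sum_le_sum fun j _ =>
          hA _ (isSparse_indicator_fiber q j (hq j) u)
    _ = c * ∑ j ∈ range n, l2norm (block j) := (mul_sum _ _ _).symm
    _ ≤ c * (√n * l2norm u) := by
        gcongr
        have h := sum_le_sqrt_card_mul_sqrt_sum_sq (range n) (fun j => l2norm (block j))
        rwa [card_range, sum_range_l2norm_indicator_fiber_sq q hqn,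
          Real.sqrt_sq (l2norm_nonneg u)] at h
    _ = c * √n * l2norm u := (mul_assoc _ _ _).symm

lemma card_filter_div_eq_le {N b : ℕ} (hb : 0 < b) (j : ℕ) :
    #{i : Fin N | (i : ℕ) / b = j} ≤ b := by
  calc #{i : Fin N | (i : ℕ) / b = j} ≤ #(range b) := by
        refine card_le_card_of_injOn (fun i => (i : ℕ) % b)
          (fun i _ => mem_range.2 (Nat.mod_lt _ hb)) fun i hi i' hi' h => ?_
        simp only [coe_filter, mem_univ, true_and, Set.mem_ofPred_eq] at hi hi'
        ext
        rw [← Nat.div_add_mod i b, ← Nat.div_add_mod i' b, hi, hi']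
        exact congrArg _ h
    _ = b := card_range b

end Blocks

lemma HasRIP.l2norm_mulVec_le {M N k : ℕ} {δ : ℝ} {A : Matrix (Fin M) (Fin N) ℝ}
    (hA : HasRIP A k δ) {v : Fin N → ℝ} (hv : IsSparse k v) :
    l2norm (A *ᵥ v) ≤ √(1 + δ) * l2norm v := by
  rw [← Real.sqrt_sq (l2norm_nonneg (A *ᵥ v)), ← Real.sqrt_sq (l2norm_nonneg v),
    ← Real.sqrt_mul' _ (sq_nonneg _)]
  exact Real.sqrt_le_sqrt (hA v hv).2

lemma HasRIP.l2norm_mulVec_le_sqrt_div {M N s : ℕ} {δ : ℝ} {A : Matrix (Fin M) (Fin N) ℝ}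
    (hA : HasRIP A (2 * s) δ) (hs : 0 < s) (hN : 2 * s ≤ N) (u : Fin N → ℝ) :
    l2norm (A *ᵥ u) ≤ √(1 + δ) * √(N / s) * l2norm u := by
  have hblocks : ∀ i : Fin N, (i : ℕ) / (2 * s) < N / s := by
    intro i
    have := Nat.lt_div_mul_add (a := N) hs
    rw [Nat.div_lt_iff_lt_mul (by omega)]
    nlinarith [i.isLt]
  calc l2norm (A *ᵥ u) ≤ √(1 + δ) * √(N / s : ℕ) * l2norm u :=
        l2norm_mulVec_le_of_fibers (Real.sqrt_nonneg _) A (fun v hv => hA.l2norm_mulVec_le hv)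
          _ hblocks (card_filter_div_eq_le (by omega)) u
    _ ≤ √(1 + δ) * √(N / s) * l2norm u := by
        gcongr
        · exact l2norm_nonneg u
        · exact Nat.cast_div_le

section SmallestPosSV

variable {M N : ℕ} (Φ : Matrix (Fin M) (Fin N) ℝ)

lemma toLp_mem_orthogonal_ker_iff {u : Fin N → ℝ} :
    toLp 2 u ∈ (LinearMap.ker (Matrix.toLpLin 2 2 Φ))ᗮ ↔ ∀ y, Φ *ᵥ y = 0 → u ⬝ᵥ y = 0 := by
  simp only [Submodule.mem_orthogonal, LinearMap.mem_ker, Matrix.toLpLin_apply,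
    WithLp.toLp_eq_zero]
  refine ⟨fun h y hy => ?_, fun h y hy => ?_⟩
  · simpa [EuclideanSpace.inner_toLp_toLp, dotProduct_comm] using h (toLp 2 y) hy
  · simpa [EuclideanSpace.inner_eq_star_dotProduct, dotProduct_comm] using h _ hy

lemma exists_eq_add_of_mulVec_eq_zero_of_orthogonal (v : Fin N → ℝ) :
    ∃ w u : Fin N → ℝ, Φ *ᵥ w = 0 ∧ (∀ y, Φ *ᵥ y = 0 → u ⬝ᵥ y = 0) ∧ v = w + u := by
  obtain ⟨w, hw, u, hu, h⟩ :=
    (LinearMap.ker (Matrix.toLpLin 2 2 Φ)).exists_add_mem_mem_orthogonal (toLp 2 v)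
  refine ⟨ofLp w, ofLp u, by simpa [Matrix.toLpLin_apply] using hw,
    (toLp_mem_orthogonal_ker_iff Φ).1 hu, ?_⟩
  rw [← WithLp.ofLp_add, ← h]

lemma exists_pos_mul_l2norm_le_l2norm_mulVec :
    ∃ c > 0, ∀ u : Fin N → ℝ, (∀ y, Φ *ᵥ y = 0 → u ⬝ᵥ y = 0) →
      c * l2norm u ≤ l2norm (Φ *ᵥ u) := by
  set K := LinearMap.ker (Matrix.toLpLin 2 2 Φ)
  set f := (Matrix.toLpLin 2 2 Φ).domRestrict Kᗮ
  have hf : LinearMap.ker f = ⊥ := by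
    refine (Submodule.eq_bot_iff _).2 fun x hx => ?_
    have hxK : (x : EuclideanSpace ℝ (Fin N)) ∈ K := hx
    exact Subtype.ext (inner_self_eq_zero.1 (K.inner_right_of_mem_orthogonal hxK x.2))
  obtain ⟨C, -, hC⟩ := f.exists_antilipschitzWith hf
  obtain ⟨c, hc, hbound⟩ := antilipschitzWith_iff_exists_mul_le_norm.1 ⟨C, hC⟩
  refine ⟨c, hc, fun u hu => ?_⟩
  simpa [l2norm_eq_norm_toLp, f, Matrix.toLpLin_apply] using
    hbound ⟨toLp 2 u, (toLp_mem_orthogonal_ker_iff Φ).2 hu⟩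

lemma smallestPosSV_nonneg : 0 ≤ smallestPosSV Φ :=
  Real.sInf_nonneg (by rintro t ⟨x, -, -, rfl⟩; exact l2norm_nonneg _)

lemma l2norm_le_div_smallestPosSV {u : Fin N → ℝ} (hu : ∀ y, Φ *ᵥ y = 0 → u ⬝ᵥ y = 0) :
    l2norm u ≤ l2norm (Φ *ᵥ u) / smallestPosSV Φ := by
  rcases eq_or_ne u 0 with rfl | hu0
  · simp [l2norm]
  obtain ⟨c, hc, hbound⟩ := exists_pos_mul_l2norm_le_l2norm_mulVec Φ
  set r := l2norm u
  have hr : 0 < r := (l2norm_nonneg u).lt_of_ne' (by simpa [l2norm_eq_norm_toLp] using hu0)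
  have hmem : r⁻¹ * l2norm (Φ *ᵥ u) ∈ { t : ℝ | ∃ x : Fin N → ℝ, l2norm x = 1 ∧
      (∀ y : Fin N → ℝ, Φ.mulVec y = 0 → x ⬝ᵥ y = 0) ∧ t = l2norm (Φ.mulVec x) } := by
    refine ⟨r⁻¹ • u, ?_, fun y hy => ?_, ?_⟩
    · rw [l2norm_smul, abs_of_pos (inv_pos.2 hr), inv_mul_cancel₀ hr.ne']
    · rw [smul_dotProduct, hu y hy, smul_zero]
    · rw [Matrix.mulVec_smul, l2norm_smul, abs_of_pos (inv_pos.2 hr)]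
  have hpos : 0 < smallestPosSV Φ := hc.trans_le <| le_csInf ⟨_, hmem⟩ <| by
    rintro t ⟨x, hx, hxo, rfl⟩
    simpa [hx] using hbound x hxo
  have hle : smallestPosSV Φ ≤ r⁻¹ * l2norm (Φ *ᵥ u) :=
    csInf_le ⟨0, by rintro t ⟨x, -, -, rfl⟩; exact l2norm_nonneg _⟩ hmem
  rw [le_div_iff₀ hpos]
  calc r * smallestPosSV Φ ≤ r * (r⁻¹ * l2norm (Φ *ᵥ u)) := by gcongr
    _ = l2norm (Φ *ᵥ u) := by field_simp

end SmallestPosSV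

theorem stmt6_general {s M N : ℕ} (hs : 0 < s) (hN : 2 * s ≤ N)
    {δ : ℝ}
    (nstar : (Fin N → ℝ) → ℝ)
    {C₁ C₂ : ℝ}
    (H : ∀ A : Matrix (Fin M) (Fin N) ℝ, HasRIP A (2 * s) δ →
      ∀ x xhat : Fin N → ℝ, ∀ ρ : ℝ, 0 ≤ ρ →
        l1norm xhat ≤ l1norm x →
        l2norm (A.mulVec x - A.mulVec xhat) ≤ 2 * ρ →
        nstar (xhat - x) ≤ C₁ * ρ + C₂ * sigmaApprox s x) :
    ∀ Φ : Matrix (Fin M) (Fin N) ℝ, HasRIPNSP Φ (2 * s) δ →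
      ∀ x xhat : Fin N → ℝ, ∀ ε : ℝ, 0 ≤ ε →
        l1norm xhat ≤ l1norm x →
        l2norm (Φ.mulVec x - Φ.mulVec xhat) ≤ 2 * ε →
        nstar (xhat - x) ≤
          C₁ * (Real.sqrt (1 + δ) / smallestPosSV Φ) * Real.sqrt ((N : ℝ) / (s : ℝ)) * ε +
            C₂ * sigmaApprox s x := by
  rintro Φ ⟨A, hker, hA⟩ x xhat ε hε hl1 hΦ
  obtain ⟨w, u, hw, hu, hv⟩ := exists_eq_add_of_mulVec_eq_zero_of_orthogonal Φ (x - xhat)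
  have hAw : A *ᵥ w = 0 := (Set.ext_iff.1 hker w).2 hw
  have hAu : A *ᵥ x - A *ᵥ xhat = A *ᵥ u := by
    rw [← Matrix.mulVec_sub, hv, Matrix.mulVec_add, hAw, zero_add]
  have hΦu : Φ *ᵥ x - Φ *ᵥ xhat = Φ *ᵥ u := by
    rw [← Matrix.mulVec_sub, hv, Matrix.mulVec_add, hw, zero_add]
  have hsv := smallestPosSV_nonneg Φ
  set ρ := √(1 + δ) / smallestPosSV Φ * √(N / s) * ε
  have hAρ : l2norm (A *ᵥ x - A *ᵥ xhat) ≤ 2 * ρ := by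
    have hu_le : l2norm u ≤ 2 * ε / smallestPosSV Φ :=
      (l2norm_le_div_smallestPosSV Φ hu).trans (by gcongr; rwa [← hΦu])
    calc l2norm (A *ᵥ x - A *ᵥ xhat) ≤ √(1 + δ) * √(N / s) * l2norm u :=
          hAu ▸ hA.l2norm_mulVec_le_sqrt_div hs hN u
      _ ≤ √(1 + δ) * √(N / s) * (2 * ε / smallestPosSV Φ) := by gcongr
      _ = 2 * ρ := by ring
  calc nstar (xhat - x) ≤ C₁ * ρ + C₂ * sigmaApprox s x := H A hA x xhat ρ (by positivity) hl1 hAρ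
    _ = _ := by ring

/-- **Proposition 3.2.**
If every RIP matrix `A` (order `2s`, constant `δ`) satisfies
`‖x̂‖₁ ≤ ‖x‖₁ ∧ ‖Ax - Ax̂‖₂ ≤ 2ρ → ‖x̂ - x‖_* ≤ C₁ ρ + C₂ σ_s(x)`,
then every RIP-NSP matrix `Φ` (order `2s`, constant `δ`) satisfies
`‖x̂‖₁ ≤ ‖x‖₁ ∧ ‖Φx - Φx̂‖₂ ≤ 2ε → ‖x̂ - x‖_* ≤ C₁ (√(1+δ)/λ(Φ)) √(N/s) ε + C₂ σ_s(x)`. -/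
theorem stmt6 {s M N : ℕ} (hs : 0 < s) (hM : 0 < M) (hN : 2 * s ≤ N)
    {δ : ℝ} (hδ0 : 0 < δ) (hδ1 : δ < 1)
    (nstar : (Fin N → ℝ) → ℝ)
    (h_smul : ∀ (a : ℝ) (v : Fin N → ℝ), nstar (a • v) = |a| * nstar v)
    (h_add : ∀ u v : Fin N → ℝ, nstar (u + v) ≤ nstar u + nstar v)
    (h_eq_zero : ∀ v : Fin N → ℝ, nstar v = 0 ↔ v = 0)
    {C₁ C₂ : ℝ} (hC₁ : 0 < C₁) (hC₂ : 0 < C₂)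
    (H : ∀ A : Matrix (Fin M) (Fin N) ℝ, HasRIP A (2 * s) δ →
      ∀ x xhat : Fin N → ℝ, ∀ ρ : ℝ, 0 ≤ ρ →
        l1norm xhat ≤ l1norm x →
        l2norm (A.mulVec x - A.mulVec xhat) ≤ 2 * ρ →
        nstar (xhat - x) ≤ C₁ * ρ + C₂ * sigmaApprox s x) :
    ∀ Φ : Matrix (Fin M) (Fin N) ℝ, HasRIPNSP Φ (2 * s) δ →
      ∀ x xhat : Fin N → ℝ, ∀ ε : ℝ, 0 ≤ ε →
        l1norm xhat ≤ l1norm x →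
        l2norm (Φ.mulVec x - Φ.mulVec xhat) ≤ 2 * ε →
        nstar (xhat - x) ≤
          C₁ * (Real.sqrt (1 + δ) / smallestPosSV Φ) * Real.sqrt ((N : ℝ) / (s : ℝ)) * ε +
            C₂ * sigmaApprox s x :=
  stmt6_general hs hN nstar H
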